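/- Let f be a transcendental entire function, let R0 > 0 be such that M(r, f) > r for all r ≥ R0, and let ε : [R0, ∞) → (0, 1) be a nonincreasing function such that ε(M^n(r, f)) ≥ ε(r)^{n+1} for all r ≥ R0 and all n ≥ 1. Define η(r) = ε(r) M(r, f). Then there exists R1 ≥ R0 such that η maps [R1, ∞) into itself and, for all r ≥ R1 and all k ≥ 1, η^k(r) ≥ ε(r)^{-(k+1)} M^k(ε(r)·r, f), where η^k denotes the k-th iterate of η. -/

import Mathlib

/-- The maximum modulus function `M(r, f) = max_{|z| = r} |f z|`. -/
noncomputable def maxMod (f : ℂ → ℂ) (r : ℝ) : ℝ :=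
  sSup ((fun z => ‖f z‖) '' Metric.sphere (0 : ℂ) r)

/-- `f` is a transcendental entire function: differentiable on all of `ℂ`
and not (the evaluation of) a polynomial. -/
def EntireTranscendental (f : ℂ → ℂ) : Prop :=
  Differentiable ℂ f ∧ ¬∃ p : Polynomial ℂ, ∀ z, f z = p.eval z

/-!
Since `f` is transcendental, Cauchy's estimates show that `M(r) / r ^ 3` is unbounded, and the
maximum principle for `f(z) / z ^ 3` on annuli shows that it is quasiconvex in `r`; hence it is
eventually nondecreasing, i.e. `M(a t) ≥ a ^ 3 M(t)` for `a ≥ 1` and large `t`, and in particular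
`M(s) ≥ s ^ 2` eventually. Along the orbit `M^n(S)`, which therefore grows doubly exponentially,
`ε` decays at most geometrically, so `ε(r) r → ∞`; this makes `η` map some `[R1, ∞)` into itself.
Finally, by induction on `k`, with `c = ε(r)`: since `ε(η^k r) ≥ ε(M^k r) ≥ c ^ (k + 1)`,
applying `M` to `η^k r ≥ c^-(k+1) M^k(c r)` gains a factor `c^-3(k+1)`, and
`c ^ (k + 1) c^-3(k+1) ≥ c^-(k+2)`.
-/

open Set Filter Topology Metric

section MaxModulus

variable {f : ℂ → ℂ}

lemma maxMod_nonneg (f : ℂ → ℂ) (r : ℝ) : 0 ≤ maxMod f r :=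
  Real.sSup_nonneg <| by rintro _ ⟨z, -, rfl⟩; exact norm_nonneg _

lemma norm_le_maxMod (hf : Continuous f) {z : ℂ} {r : ℝ} (hz : ‖z‖ = r) :
    ‖f z‖ ≤ maxMod f r :=
  le_csSup ((isCompact_sphere 0 r).image (continuous_norm.comp hf)).bddAbove
    ⟨z, mem_sphere_zero_iff_norm.2 hz, rfl⟩

lemma maxMod_le {r C : ℝ} (hC : 0 ≤ C) (h : ∀ z : ℂ, ‖z‖ = r → ‖f z‖ ≤ C) :
    maxMod f r ≤ C :=
  Real.sSup_le (by rintro _ ⟨z, hz, rfl⟩; exact h z (mem_sphere_zero_iff_norm.1 hz)) hC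

lemma monotoneOn_maxMod (hf : Differentiable ℂ f) : MonotoneOn (maxMod f) (Ici 0) := by
  intro a ha b _ hab
  rcases (mem_Ici.1 ha).trans hab |>.eq_or_lt with rfl | hb
  · rw [le_antisymm hab ha]
  refine maxMod_le (maxMod_nonneg f b) fun z hz => ?_
  refine Complex.norm_le_of_forall_mem_frontier_norm_le isBounded_ball hf.diffContOnCl
    (fun w hw => ?_) (by rw [closure_ball 0 hb.ne']; simpa [hz] using hab)
  rw [frontier_ball 0 hb.ne'] at hw
  exact norm_le_maxMod hf.continuous (mem_sphere_zero_iff_norm.1 hw)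

lemma norm_le_of_mem_annulus {g : ℂ → ℂ} (hg : ∀ z ≠ 0, DifferentiableAt ℂ g z) {a c K : ℝ}
    (ha : 0 < a) (hbd : ∀ z : ℂ, ‖z‖ = a ∨ ‖z‖ = c → ‖g z‖ ≤ K) {z : ℂ} (haz : a < ‖z‖)
    (hzc : ‖z‖ < c) : ‖g z‖ ≤ K := by
  set U : Set ℂ := {w | a < ‖w‖} ∩ {w | ‖w‖ < c}
  have hne : ∀ w ∈ closure U, w ≠ 0 := by
    intro w hw h0
    have haw : a ≤ ‖w‖ := closure_lt_subset_le continuous_const continuous_norm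
      (closure_inter_subset_inter_closure _ _ hw).1
    rw [h0, norm_zero] at haw
    linarith
  refine Complex.norm_le_of_forall_mem_frontier_norm_le
    (isBounded_ball (x := 0) (r := c) |>.subset fun w hw => by simpa using hw.2)
    ⟨fun w hw => (hg w (hne w (subset_closure hw))).differentiableWithinAt,
      fun w hw => (hg w (hne w hw)).continuousAt.continuousWithinAt⟩
    (fun w hw => hbd w ?_) (subset_closure ⟨haz, hzc⟩)
  rcases frontier_inter_subset _ _ hw with ⟨hw, -⟩ | ⟨-, hw⟩
  · exact Or.inl (frontier_lt_subset_eq continuous_const continuous_norm hw).symm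
  · exact Or.inr (frontier_lt_subset_eq continuous_norm continuous_const hw)

lemma maxMod_div_pow_le_max (hf : Differentiable ℂ f) (d : ℕ) {a b c : ℝ} (ha : 0 < a)
    (hab : a ≤ b) (hbc : b ≤ c) :
    maxMod f b / b ^ d ≤ max (maxMod f a / a ^ d) (maxMod f c / c ^ d) := by
  rcases hab.eq_or_lt with rfl | hab
  · exact le_max_left _ _
  rcases hbc.eq_or_lt with rfl | hbc
  · exact le_max_right _ _
  have hb : 0 < b := ha.trans hab
  have hc : 0 < c := hb.trans hbc
  have hK : 0 ≤ max (maxMod f a / a ^ d) (maxMod f c / c ^ d) :=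
    le_max_of_le_left (div_nonneg (maxMod_nonneg f a) (by positivity))
  rw [div_le_iff₀ (by positivity)]
  refine maxMod_le (mul_nonneg hK (by positivity)) fun z hz => ?_
  have hbd : ∀ w : ℂ, ‖w‖ = a ∨ ‖w‖ = c →
      ‖f w / w ^ d‖ ≤ max (maxMod f a / a ^ d) (maxMod f c / c ^ d) := by
    rintro w (hw | hw) <;> rw [norm_div, norm_pow, hw]
    · exact le_max_of_le_left <|
        div_le_div_of_nonneg_right (norm_le_maxMod hf.continuous hw) (by positivity)
    · exact le_max_of_le_right <|
        div_le_div_of_nonneg_right (norm_le_maxMod hf.continuous hw) (by positivity)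
  have := norm_le_of_mem_annulus (g := fun w => f w / w ^ d)
    (fun w hw => (hf w).div (differentiableAt_pow d) (pow_ne_zero d hw)) ha hbd (hz ▸ hab)
    (hz ▸ hbc)
  rwa [norm_div, norm_pow, hz, div_le_iff₀ (by positivity)] at this

lemma iteratedDeriv_eq_zero_of_maxMod_le (hf : Differentiable ℂ f) {d n : ℕ} (hdn : d < n)
    {r₀ B : ℝ} (hB : ∀ s ≥ r₀, maxMod f s ≤ B * s ^ d) : iteratedDeriv n f 0 = 0 := by
  have hbound : ∀ R ≥ max r₀ 1, ‖iteratedDeriv n f 0‖ ≤ n.factorial * B * (R ^ (n - d))⁻¹ := by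
    intro R hR
    have hR0 : 0 < R := one_pos.trans_le (le_of_max_le_right hR)
    have hRn : R ^ n = R ^ d * R ^ (n - d) := by rw [← pow_add, Nat.add_sub_cancel' hdn.le]
    calc ‖iteratedDeriv n f 0‖ ≤ n.factorial * (B * R ^ d) / R ^ n :=
          Complex.norm_iteratedDeriv_le_of_forall_mem_sphere_norm_le n hR0 hf.diffContOnCl
            fun z hz => (norm_le_maxMod hf.continuous (mem_sphere_zero_iff_norm.1 hz)).trans
              (hB R (le_of_max_le_left hR))
      _ = n.factorial * B * (R ^ (n - d))⁻¹ := by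
          rw [hRn]; field_simp
  have hlim : Tendsto (fun R : ℝ => n.factorial * B * (R ^ (n - d))⁻¹) atTop (𝓝 0) := by
    simpa using (tendsto_inv_atTop_zero.comp (tendsto_pow_atTop (by omega))).const_mul
      (n.factorial * B)
  exact norm_le_zero_iff.1 (ge_of_tendsto hlim (eventually_ge_atTop _ |>.mono hbound))

open Polynomial in
lemma exists_polynomial_of_maxMod_le (hf : Differentiable ℂ f) {d : ℕ} {r₀ B : ℝ}
    (hB : ∀ s ≥ r₀, maxMod f s ≤ B * s ^ d) : ∃ p : ℂ[X], ∀ z, f z = p.eval z := by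
  refine ⟨∑ n ∈ Finset.range (d + 1),
    C ((n.factorial : ℂ)⁻¹ * iteratedDeriv n f 0) * X ^ n, fun z => ?_⟩
  have hsum : HasSum (fun n : ℕ => (n.factorial : ℂ)⁻¹ • (z - 0) ^ n • iteratedDeriv n f 0)
      (∑ n ∈ Finset.range (d + 1), (n.factorial : ℂ)⁻¹ • (z - 0) ^ n • iteratedDeriv n f 0) :=
    hasSum_sum_of_ne_finset_zero fun n hn => by
      rw [iteratedDeriv_eq_zero_of_maxMod_le hf (by simpa using hn) hB, smul_zero, smul_zero]
  rw [(Complex.hasSum_taylorSeries_of_entire hf 0 z).unique hsum, eval_finsetSum]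
  refine Finset.sum_congr rfl fun n _ => ?_
  simp only [sub_zero, smul_eq_mul, eval_mul, eval_C, eval_pow, eval_X]
  ring

end MaxModulus

lemma monotoneOn_Ici_of_le_max {φ : ℝ → ℝ} {r₀ W : ℝ}
    (hφ : ∀ a b c, r₀ ≤ a → a ≤ b → b ≤ c → φ b ≤ max (φ a) (φ c)) (hr₀W : r₀ ≤ W)
    (hW : φ r₀ < φ W) : MonotoneOn φ (Ici W) := by
  intro t ht s _ hts
  have hWt : φ W ≤ φ t := by
    simpa [hW.not_ge] using hφ r₀ W t le_rfl hr₀W ht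
  simpa [(hW.trans_le hWt).not_ge] using hφ r₀ t s le_rfl (hr₀W.trans ht) hts

lemma pow_mul_le_of_monotoneOn_div_pow {g : ℝ → ℝ} {d : ℕ} {W : ℝ} (hW : 0 < W)
    (hg : MonotoneOn (fun s => g s / s ^ d) (Ici W)) {t a : ℝ} (ht : W ≤ t) (ha : 1 ≤ a) :
    a ^ d * g t ≤ g (a * t) := by
  have ht0 : 0 < t := hW.trans_le ht
  have hat : t ≤ a * t := le_mul_of_one_le_left ht0.le ha
  have := hg ht (ht.trans hat) hat
  rw [div_le_div_iff₀ (by positivity) (by positivity), mul_pow] at this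
  nlinarith [pow_pos ht0 d]

lemma EntireTranscendental.exists_pow_mul_maxMod_le {f : ℂ → ℂ} (hf : EntireTranscendental f)
    (d : ℕ) (r₀ : ℝ) :
    ∃ W, r₀ < W ∧ 1 < W ∧ ∀ t ≥ W, ∀ a ≥ 1, a ^ d * maxMod f t ≤ maxMod f (a * t) := by
  set r₁ := max r₀ 1
  have hr₁ : 0 < r₁ := lt_max_of_lt_right one_pos
  obtain ⟨W, hr₁_le_W, hW⟩ : ∃ W ≥ r₁, maxMod f r₁ / r₁ ^ d < maxMod f W / W ^ d := by
    by_contra! hbdd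
    refine hf.2 (exists_polynomial_of_maxMod_le hf.1 (d := d) (r₀ := r₁)
      (B := maxMod f r₁ / r₁ ^ d) fun s hs => ?_)
    have := hbdd s hs
    rwa [div_le_iff₀ (pow_pos (hr₁.trans_le hs) d)] at this
  have hr₁_lt_W : r₁ < W := hr₁_le_W.lt_of_ne (by rintro rfl; exact hW.false)
  refine ⟨W, (le_max_left _ _).trans_lt hr₁_lt_W, (le_max_right _ _).trans_lt hr₁_lt_W,
    fun t ht a ha => pow_mul_le_of_monotoneOn_div_pow (hr₁.trans hr₁_lt_W) ?_ ht ha⟩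
  exact monotoneOn_Ici_of_le_max
    (fun a b c ha => maxMod_div_pow_le_max hf.1 d (hr₁.trans_le ha)) hr₁_le_W hW

lemma sq_le_of_forall_pow_three_mul_le {g : ℝ → ℝ} {W : ℝ} (hW : 1 ≤ W) (hgW : W ≤ g W)
    (hg : ∀ a ≥ 1, a ^ 3 * g W ≤ g (a * W)) {s : ℝ} (hs : W ^ 2 ≤ s) : s ^ 2 ≤ g s := by
  have hW0 : 0 < W := one_pos.trans_le hW
  have ha : W ≤ s / W := by rw [le_div_iff₀ hW0]; nlinarith
  have := hg (s / W) (hW.trans ha)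
  rw [div_mul_cancel₀ s hW0.ne'] at this
  calc s ^ 2 ≤ (s / W) ^ 3 * W := by
        rw [div_pow, div_mul_eq_mul_div, le_div_iff₀ (by positivity)]
        nlinarith [mul_le_mul_of_nonneg_left hs (by positivity : 0 ≤ s ^ 2 * W)]
    _ ≤ (s / W) ^ 3 * g W := by have := hW0.trans_le ha; gcongr
    _ ≤ g s := this

lemma tendsto_mul_atTop_of_sq_le {g ε : ℝ → ℝ} {S : ℝ} (hS : 1 < S)
    (hg : ∀ s ≥ S, s ^ 2 ≤ g s) (hε0 : 0 < ε S) (hε : AntitoneOn ε (Ici S))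
    (hεg : ∀ n, ε S ^ (n + 1) ≤ ε (g^[n] S)) :
    Tendsto (fun r => ε r * r) atTop atTop := by
  set u : ℕ → ℝ := fun n => g^[n] S
  have hu_succ : ∀ n, u (n + 1) = g (u n) := fun n => Function.iterate_succ_apply' g n S
  have hSu : ∀ n, S ≤ u n := by
    intro n
    induction n with
    | zero => exact le_rfl
    | succ n ih => rw [hu_succ]; nlinarith [hg _ ih]
  have hu_sq : ∀ n, u n ^ 2 ≤ u (n + 1) := fun n => hu_succ n ▸ hg _ (hSu n)
  have hu_mono : StrictMono u :=
    strictMono_nat_of_lt_succ fun n => by nlinarith [hu_sq n, hSu n]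
  have hu_top : Tendsto u atTop atTop :=
    tendsto_atTop_of_geom_le (by simp [u]; linarith) hS fun n => by nlinarith [hu_sq n, hSu n]
  -- On `[u n, u (n + 1)]` the product `ε r * r` is at least `x n`, and `x` grows geometrically.
  set x : ℕ → ℝ := fun n => ε S ^ (n + 2) * u n
  have hx_top : Tendsto x atTop atTop := by
    obtain ⟨N, hN⟩ := eventually_atTop.1 (hu_top.eventually_ge_atTop (2 / ε S))
    refine (tendsto_add_atTop_iff_nat N).1 <| tendsto_atTop_of_geom_le
      (mul_pos (pow_pos hε0 _) (by linarith [hSu (0 + N)])) one_lt_two fun n => ?_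
    have h2 : 2 ≤ ε S * u (n + N) := by
      rw [← div_le_iff₀' hε0]; exact hN _ (by omega)
    calc 2 * x (n + N) ≤ ε S * u (n + N) * x (n + N) := by
          gcongr; exact (mul_pos (pow_pos hε0 _) (by linarith [hSu (n + N)])).le
      _ = ε S ^ (n + N + 3) * u (n + N) ^ 2 := by ring
      _ ≤ ε S ^ (n + N + 3) * u (n + N + 1) := by gcongr; exact hu_sq _
      _ = x (n + 1 + N) := by rw [show n + 1 + N = n + N + 1 by omega]
  refine tendsto_atTop.2 fun W => ?_
  obtain ⟨N, hN⟩ := eventually_atTop.1 (hx_top.eventually_ge_atTop W)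
  filter_upwards [eventually_gt_atTop (u N)] with r hr
  obtain ⟨m, hm, hm'⟩ := StrictMono.exists_between_of_tendsto_atTop (t := fun m => u (m + N))
    (fun a b hab => hu_mono (by omega)) ((tendsto_add_atTop_iff_nat N).2 hu_top)
    (by simpa using hr)
  have hr_le : r ≤ u (m + N + 1) := hm'.trans_eq (congrArg u (by omega))
  have hεr : ε S ^ (m + N + 2) ≤ ε r :=
    (hεg (m + N + 1)).trans <| hε (hSu _ |>.trans hm.le) (hSu _) hr_le
  calc W ≤ x (m + N) := hN _ (by omega)
    _ ≤ ε r * r := mul_le_mul hεr hm.le (by linarith [hSu (m + N)]) ((pow_pos hε0 _).le.trans hεr)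

section Iteration

variable {M ε : ℝ → ℝ} {R r : ℝ}

lemma mapsTo_mul_Ici (hR : 0 ≤ R) (hM : ∀ s ≥ R, s ^ 2 ≤ M s) (hε0 : ∀ s ≥ R, 0 ≤ ε s)
    (hε : ∀ s ≥ R, 1 ≤ ε s * s) : MapsTo (fun s => ε s * M s) (Ici R) (Ici R) := by
  intro s hs
  calc R ≤ s := hs
    _ ≤ ε s * s * s := le_mul_of_one_le_left (hR.trans hs) (hε s hs)
    _ = ε s * s ^ 2 := by ring
    _ ≤ ε s * M s := mul_le_mul_of_nonneg_left (hM s hs) (hε0 s hs)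

lemma iterate_mul_le_iterate (hM0 : ∀ s, 0 ≤ M s) (hMmono : MonotoneOn M (Ici R))
    (hη : MapsTo (fun s => ε s * M s) (Ici R) (Ici R)) (hε1 : ∀ s ≥ R, ε s ≤ 1) (hr : R ≤ r)
    (k : ℕ) : (fun s => ε s * M s)^[k] r ≤ M^[k] r := by
  induction k with
  | zero => exact le_rfl
  | succ k ih =>
    have ht : R ≤ (fun s => ε s * M s)^[k] r := hη.iterate k hr
    rw [Function.iterate_succ_apply', Function.iterate_succ_apply']
    calc ε _ * M _ ≤ M _ := mul_le_of_le_one_left (hM0 _) (hε1 _ ht)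
      _ ≤ M (M^[k] r) := hMmono ht (ht.trans ih) ih

lemma inv_pow_mul_iterate_le_iterate_mul {W : ℝ} (hW : 0 ≤ W) (hWR : W ≤ R)
    (hM0 : ∀ s, 0 ≤ M s) (hMmono : MonotoneOn M (Ici W)) (hMW : MapsTo M (Ici W) (Ici W))
    (hMpow : ∀ t ≥ W, ∀ a ≥ 1, a ^ 3 * M t ≤ M (a * t))
    (hη : MapsTo (fun s => ε s * M s) (Ici R) (Ici R)) (hε : ∀ s ≥ R, ε s ∈ Ioc 0 1)
    (hεanti : AntitoneOn ε (Ici R)) (hr : R ≤ r) (hεM : ∀ n, ε r ^ (n + 1) ≤ ε (M^[n] r))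
    (hWr : W ≤ ε r * r) (k : ℕ) :
    (ε r)⁻¹ ^ (k + 1) * M^[k] (ε r * r) ≤ (fun s => ε s * M s)^[k] r := by
  obtain ⟨hc0, hc1⟩ := hε r hr
  have hc : 1 ≤ (ε r)⁻¹ := (one_le_inv₀ hc0).2 hc1
  induction k with
  | zero => simp [hc0.ne']
  | succ k ih =>
    set t := (fun s => ε s * M s)^[k] r
    set m := M^[k] (ε r * r)
    have ht : R ≤ t := hη.iterate k hr
    have hm : W ≤ m := hMW.iterate k hWr
    have htM : t ≤ M^[k] r := iterate_mul_le_iterate hM0 (hMmono.mono (Ici_subset_Ici.2 hWR))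
      hη (fun s hs => (hε s hs).2) hr k
    have hεt : ε r ^ (k + 1) ≤ ε t := (hεM k).trans (hεanti ht (ht.trans htM) htM)
    have hMt : ((ε r)⁻¹ ^ (k + 1)) ^ 3 * M m ≤ M t :=
      (hMpow m hm _ (one_le_pow₀ hc)).trans <| hMmono
        (hm.trans (le_mul_of_one_le_left (hW.trans hm) (one_le_pow₀ hc))) (hWR.trans ht) ih
    rw [Function.iterate_succ_apply', Function.iterate_succ_apply']
    calc (ε r)⁻¹ ^ (k + 1 + 1) * M m ≤ (ε r)⁻¹ ^ (2 * (k + 1)) * M m := by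
          gcongr
          exacts [hM0 m, by omega]
      _ = ε r ^ (k + 1) * (((ε r)⁻¹ ^ (k + 1)) ^ 3 * M m) := by
          have : ε r ^ (k + 1) ≠ 0 := by positivity
          rw [pow_mul', inv_pow]
          field_simp
      _ ≤ ε t * M t := mul_le_mul hεt hMt (mul_nonneg (by positivity) (hM0 m)) (hε t ht).1.le

end Iteration

theorem simply_connected_fast_escaping_stmt4_general
    (f : ℂ → ℂ) (hf : EntireTranscendental f)
    (R0 : ℝ) (hM : ∀ r ≥ R0, r < maxMod f r)
    (ε : ℝ → ℝ)
    (hε01 : ∀ r ≥ R0, ε r ∈ Set.Ioo (0 : ℝ) 1)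
    (hεmono : ∀ r s, R0 ≤ r → r ≤ s → ε s ≤ ε r)
    (hεM : ∀ r ≥ R0, ∀ n : ℕ, 1 ≤ n → ε r ^ (n + 1) ≤ ε ((maxMod f)^[n] r)) :
    ∃ R1 : ℝ, R0 ≤ R1 ∧ (∀ r ≥ R1, R1 ≤ ε r * maxMod f r) ∧
      ∀ r ≥ R1, ∀ k : ℕ, 1 ≤ k →
        (ε r)⁻¹ ^ (k + 1) * (maxMod f)^[k] (ε r * r) ≤
          (fun s => ε s * maxMod f s)^[k] r := by
  obtain ⟨W, hR0W, hW1, hMpow⟩ := hf.exists_pow_mul_maxMod_le 3 R0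
  have hWW : W ≤ W ^ 2 := by nlinarith
  have hMW : MapsTo (maxMod f) (Ici W) (Ici W) := fun s hs =>
    mem_Ici.2 <| hs.trans (hM s (hR0W.le.trans hs)).le
  have hsq : ∀ s ≥ W ^ 2, s ^ 2 ≤ maxMod f s := fun s hs =>
    sq_le_of_forall_pow_three_mul_le hW1.le (hMW self_mem_Ici) (hMpow W le_rfl) hs
  have hεanti : AntitoneOn ε (Ici R0) := fun a ha b _ hab => hεmono a b ha hab
  have hεM' : ∀ r ≥ R0, ∀ n : ℕ, ε r ^ (n + 1) ≤ ε ((maxMod f)^[n] r) := by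
    rintro r hr (_ | n)
    · simp
    · exact hεM r hr _ (by omega)
  have hR0W2 : R0 ≤ W ^ 2 := hR0W.le.trans hWW
  obtain ⟨R2, hR2⟩ := eventually_atTop.1 <| tendsto_atTop.1 (tendsto_mul_atTop_of_sq_le
    (by nlinarith) hsq (hε01 _ hR0W2).1 (hεanti.mono (Ici_subset_Ici.2 hR0W2)) (hεM' _ hR0W2)) W
  set R1 := max R2 (W ^ 2)
  have hR0R1 : R0 ≤ R1 := hR0W2.trans (le_max_right _ _)
  have hWR1 : W ≤ R1 := hWW.trans (le_max_right _ _)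
  have hWε : ∀ s ≥ R1, W ≤ ε s * s := fun s hs => hR2 s ((le_max_left _ _).trans hs)
  have hη : MapsTo (fun s => ε s * maxMod f s) (Ici R1) (Ici R1) :=
    mapsTo_mul_Ici (by linarith) (fun s hs => hsq s ((le_max_right _ _).trans hs))
      (fun s hs => (hε01 s (hR0R1.trans hs)).1.le) (fun s hs => hW1.le.trans (hWε s hs))
  refine ⟨R1, hR0R1, fun r hr => hη hr, fun r hr k _ => ?_⟩
  exact inv_pow_mul_iterate_le_iterate_mul (by linarith) hWR1 (maxMod_nonneg f)
    ((monotoneOn_maxMod hf.1).mono (Ici_subset_Ici.2 (by linarith))) hMW hMpow hη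
    (fun s hs => Ioo_subset_Ioc_self (hε01 s (hR0R1.trans hs)))
    (hεanti.mono (Ici_subset_Ici.2 hR0R1)) hr (hεM' r (hR0R1.trans hr)) (hWε r hr) k

theorem simply_connected_fast_escaping_stmt4
    (f : ℂ → ℂ) (hf : EntireTranscendental f)
    (R0 : ℝ) (hR0 : 0 < R0) (hM : ∀ r ≥ R0, r < maxMod f r)
    (ε : ℝ → ℝ)
    (hε01 : ∀ r ≥ R0, ε r ∈ Set.Ioo (0 : ℝ) 1)
    (hεmono : ∀ r s, R0 ≤ r → r ≤ s → ε s ≤ ε r)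
    (hεM : ∀ r ≥ R0, ∀ n : ℕ, 1 ≤ n → ε r ^ (n + 1) ≤ ε ((maxMod f)^[n] r)) :
    ∃ R1 : ℝ, R0 ≤ R1 ∧ (∀ r ≥ R1, R1 ≤ ε r * maxMod f r) ∧
      ∀ r ≥ R1, ∀ k : ℕ, 1 ≤ k →
        (ε r)⁻¹ ^ (k + 1) * (maxMod f)^[k] (ε r * r) ≤
          (fun s => ε s * maxMod f s)^[k] r :=
  simply_connected_fast_escaping_stmt4_general f hf R0 hM ε hε01 hεmono hεM
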